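/- Let m be an odd positive integer. For every C ∈ R, the number of quadruples (X,Y,Z,W) ∈ 𝒯⁴ with X + Y + Z + W = C equals 2^m if C = 0; equals 2^m(2^m + 1) if C ∈ 2R and C ≠ 0; and equals 2^{2m} if C ∉ 2R. -/

import Mathlib

open Polynomial
open scoped Classical

/-!
Reduction modulo `2` maps the Teichmüller set bijectively onto the residue field `k = 𝔽_q`.
Since `4 = 0`, `(a + b) ^ q = a ^ q + b ^ q + 2 (a b) ^ (q / 2)`; hence for Teichmüller
`X, Y, Z, W` with residues `x, y, z, w` the sum `S = X + Y + Z + W` satisfies `S = S ^ q + 2 D`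
with `D̄ ^ 2 = e₂(x, y, z, w)`. An element `C = C ^ q + 2 D_C` is determined by `(C̄, D̄_C)`, so
the count equals the number of `v ∈ k⁴` with `e₁ v = C̄` and `e₂ v = D̄_C ^ 2`.

In characteristic `2`, adding `(t, t, t, t)` fixes `e₁` and shifts `e₂` by `t e₁`, so for
`e₁ ≠ 0` all `q` fibres of `e₂` have the same size `q ^ 2`. Scaling shows that all fibres with
`e₁ = 0, e₂ ≠ 0` have the same size, and the fibre over `(0, 0)` is the diagonal because
`x ^ 2 + x y + y ^ 2 = 0` has only the trivial solution when `m` is odd (`𝔽_q` contains no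
primitive cube root of unity).
-/

theorem CharTwo.sq_add_add_one_ne_zero {A : Type*} [CommRing A] [Nontrivial A] [CharP A 2]
    {m : ℕ} (hm : Odd m) (hfrob : ∀ z : A, z ^ 2 ^ m = z) (z : A) : z ^ 2 + z + 1 ≠ 0 := by
  intro hz
  have h2 : (2 : A) = 0 := CharTwo.two_eq_zero
  -- as `z ^ 2 = z + 1`, squaring twice fixes `z`, so the odd power `z ^ 2 ^ m` is `z + 1`
  have hsq : z ^ 2 = z + 1 := by linear_combination hz - (z + 1) * h2
  have hfour : ∀ j : ℕ, z ^ 4 ^ j = z := by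
    intro j
    induction j with
    | zero => simp
    | succ j ih =>
      rw [pow_succ, pow_mul, ih, show 4 = 2 * 2 from rfl, pow_mul, hsq]
      linear_combination hz
  obtain ⟨j, rfl⟩ := hm
  have := hfrob z
  rw [pow_succ, pow_mul, pow_mul 2 2 j, show (2 : ℕ) ^ 2 = 4 from rfl, hfour, hsq] at this
  exact one_ne_zero (by linear_combination this : (1 : A) = 0)

namespace Quadruple

def const {A : Type*} (t : A) : A × A × A × A := (t, t, t, t)

theorem const_injective {A : Type*} : Function.Injective (const : A → A × A × A × A) :=
  fun _ _ h => congrArg Prod.fst h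

variable {A : Type*} [CommRing A]

def esymm₁ (v : A × A × A × A) : A := v.1 + v.2.1 + v.2.2.1 + v.2.2.2

def esymm₂ (v : A × A × A × A) : A :=
  v.1 * v.2.1 + v.1 * v.2.2.1 + v.1 * v.2.2.2 + v.2.1 * v.2.2.1 + v.2.1 * v.2.2.2 +
    v.2.2.1 * v.2.2.2

theorem esymm₁_add_const [CharP A 2] (v : A × A × A × A) (t : A) :
    esymm₁ (v + const t) = esymm₁ v := by
  simp only [esymm₁, const, Prod.fst_add, Prod.snd_add]
  linear_combination (2 * t) * (CharTwo.two_eq_zero : (2 : A) = 0)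

theorem esymm₂_add_const [CharP A 2] (v : A × A × A × A) (t : A) :
    esymm₂ (v + const t) = esymm₂ v + t * esymm₁ v := by
  simp only [esymm₁, esymm₂, const, Prod.fst_add, Prod.snd_add]
  linear_combination (t * (v.1 + v.2.1 + v.2.2.1 + v.2.2.2) + 3 * t ^ 2) *
    (CharTwo.two_eq_zero : (2 : A) = 0)

theorem esymm₁_smul (c : A) (v : A × A × A × A) : esymm₁ (c • v) = c * esymm₁ v := by
  simp only [esymm₁, Prod.smul_fst, Prod.smul_snd, smul_eq_mul]
  ring

theorem esymm₂_smul (c : A) (v : A × A × A × A) : esymm₂ (c • v) = c ^ 2 * esymm₂ v := by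
  simp only [esymm₂, Prod.smul_fst, Prod.smul_snd, smul_eq_mul]
  ring

end Quadruple

section FiniteFieldCount

open Finset Quadruple

variable {K : Type*} [Field K] [Fintype K]

theorem card_esymm_fiber_mul_sq (a c : K) {t : K} (ht : t ≠ 0) :
    #{v : K × K × K × K | esymm₁ v = t * a ∧ esymm₂ v = t ^ 2 * c} =
      #{v : K × K × K × K | esymm₁ v = a ∧ esymm₂ v = c} := by
  refine (card_equiv (LinearEquiv.smulOfNeZero K _ t ht).toEquiv fun v => ?_).symm
  simp only [mem_filter, mem_univ, true_and, LinearEquiv.coe_toEquiv,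
    LinearEquiv.smulOfNeZero_apply, esymm₁_smul, esymm₂_smul, mul_right_inj' ht,
    mul_right_inj' (pow_ne_zero 2 ht)]

theorem sum_card_esymm_fiber (a : K) :
    ∑ c : K, #{v : K × K × K × K | esymm₁ v = a ∧ esymm₂ v = c} = Fintype.card K ^ 3 := by
  have hplane : #{v : K × K × K × K | esymm₁ v = a} = Fintype.card K ^ 3 := by
    rw [show Fintype.card K ^ 3 = #(univ : Finset (K × K × K)) by simp [pow_succ, mul_assoc]]
    refine card_nbij' (fun v => (v.1, v.2.1, v.2.2.1))
      (fun p => (p.1, p.2.1, p.2.2, a - p.1 - p.2.1 - p.2.2)) (fun _ _ => mem_univ _)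
      (fun p _ => ?_) (fun v hv => ?_) (fun _ _ => rfl)
    · rw [mem_coe, mem_filter, esymm₁]
      exact ⟨mem_univ _, by ring⟩
    · rw [mem_coe, mem_filter, esymm₁] at hv
      rw [← hv.2]
      ring_nf
  rw [← hplane, card_eq_sum_card_fiberwise (f := esymm₂) (t := univ) (fun _ _ => mem_univ _)]
  simp only [filter_filter]

variable [CharP K 2]

theorem card_esymm_fiber_add_mul (a c t : K) :
    #{v : K × K × K × K | esymm₁ v = a ∧ esymm₂ v = c + t * a} =
      #{v : K × K × K × K | esymm₁ v = a ∧ esymm₂ v = c} := by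
  refine (card_equiv (Equiv.addRight (const t)) fun v => ?_).symm
  simp only [mem_filter, mem_univ, true_and, Equiv.coe_addRight, esymm₁_add_const,
    esymm₂_add_const]
  constructor
  · rintro ⟨rfl, rfl⟩; exact ⟨rfl, by ring⟩
  · rintro ⟨rfl, h⟩; exact ⟨rfl, by linear_combination h⟩

theorem card_esymm_fiber_zero_zero (hK : ∀ z : K, z ^ 2 + z + 1 ≠ 0) :
    #{v : K × K × K × K | esymm₁ v = 0 ∧ esymm₂ v = 0} = Fintype.card K := by
  have h2 : (2 : K) = 0 := CharTwo.two_eq_zero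
  have hform : ∀ x y : K, x ^ 2 + x * y + y ^ 2 = 0 → x = 0 := by
    intro x y h
    by_contra hx
    exact hK (y / x) (by field_simp; linear_combination h)
  have hconst : (univ.filter fun v : K × K × K × K => esymm₁ v = 0 ∧ esymm₂ v = 0) =
      univ.image const := by
    ext v
    obtain ⟨a, b, c, d⟩ := v
    rw [mem_filter, mem_image]
    simp only [mem_univ, true_and, esymm₁, esymm₂, const, Prod.mk.injEq]
    constructor
    · rintro ⟨h1, h2'⟩
      -- translating `a` to `0` turns the equations into `d = b + c`, `b ^ 2 + b c + c ^ 2 = 0`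
      have hb : b - a = 0 := hform _ (c - a) (by
        linear_combination -h2' + (a + b + c) * h1 + (a ^ 2 - 2 * a * b - 2 * a * c) * h2)
      have hc : c - a = 0 := hform _ (b - a) (by
        linear_combination -h2' + (a + b + c) * h1 + (a ^ 2 - 2 * a * b - 2 * a * c) * h2)
      exact ⟨a, rfl, by linear_combination -hb, by linear_combination -hc,
        by linear_combination -h1 + hb + hc + 2 * a * h2⟩
    · rintro ⟨t, rfl, rfl, rfl, rfl⟩
      exact ⟨by linear_combination 2 * t * h2, by linear_combination 3 * t ^ 2 * h2⟩
  rw [hconst, card_image_of_injective _ const_injective, card_univ]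

theorem card_esymm_fiber_zero_of_ne_zero (hK : ∀ z : K, z ^ 2 + z + 1 ≠ 0) {c : K} (hc : c ≠ 0) :
    #{v : K × K × K × K | esymm₁ v = 0 ∧ esymm₂ v = c} =
      Fintype.card K * (Fintype.card K + 1) := by
  have hconst : ∀ c' : K, c' ≠ 0 → #{v : K × K × K × K | esymm₁ v = 0 ∧ esymm₂ v = c'} =
      #{v : K × K × K × K | esymm₁ v = 0 ∧ esymm₂ v = 1} := by
    intro c' hc'
    obtain ⟨r, rfl⟩ := isSquare_of_charTwo' c'
    have hr : r ≠ 0 := by rintro rfl; simp at hc'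
    simpa [sq] using card_esymm_fiber_mul_sq 0 1 hr
  have hsum := sum_card_esymm_fiber (0 : K)
  rw [← add_sum_erase _ _ (mem_univ 0), card_esymm_fiber_zero_zero hK,
    sum_congr rfl fun c' hc' => hconst c' (ne_of_mem_erase hc'), sum_const,
    card_erase_of_mem (mem_univ 0), card_univ, smul_eq_mul] at hsum
  rw [hconst c hc]
  obtain ⟨p, hp⟩ : ∃ p, Fintype.card K = p + 2 :=
    ⟨Fintype.card K - 2, by have := Fintype.one_lt_card (α := K); omega⟩
  rw [hp] at hsum ⊢
  rw [show p + 2 - 1 = p + 1 by omega] at hsum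
  refine Nat.eq_of_mul_eq_mul_left (by omega : 0 < p + 1) ?_
  linear_combination hsum

theorem card_esymm_fiber_of_ne_zero {a : K} (ha : a ≠ 0) (c : K) :
    #{v : K × K × K × K | esymm₁ v = a ∧ esymm₂ v = c} = Fintype.card K ^ 2 := by
  have hconst : ∀ c', #{v : K × K × K × K | esymm₁ v = a ∧ esymm₂ v = c'} =
      #{v : K × K × K × K | esymm₁ v = a ∧ esymm₂ v = 0} := fun c' => by
    simpa [div_mul_cancel₀ _ ha] using card_esymm_fiber_add_mul a 0 (c' / a)
  have hsum := sum_card_esymm_fiber a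
  simp only [hconst, sum_const, card_univ, smul_eq_mul] at hsum
  rw [hconst]
  have hq : 0 < Fintype.card K := Fintype.card_pos
  nlinarith

end FiniteFieldCount

section Teichmuller

open Quadruple

variable {R K : Type*} [CommRing R] [Field K] {n : ℕ}

theorem add_pow_two_pow_succ (h4 : (4 : R) = 0) (a b : R) (j : ℕ) :
    (a + b) ^ 2 ^ (j + 1) = a ^ 2 ^ (j + 1) + b ^ 2 ^ (j + 1) + 2 * (a * b) ^ 2 ^ j := by
  induction j with
  | zero => ring
  | succ j ih =>
    rw [pow_succ 2 (j + 1), pow_mul, pow_mul, pow_mul, ih, pow_succ 2 j, pow_mul (a * b)]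
    linear_combination (a ^ 2 ^ (j + 1) * (a * b) ^ 2 ^ j + b ^ 2 ^ (j + 1) * (a * b) ^ 2 ^ j +
      (a * b) ^ 2 ^ (j + 1)) * h4

theorem add_two_mul_pow_two_pow_succ (h4 : (4 : R) = 0) (a d : R) (j : ℕ) :
    (a + 2 * d) ^ 2 ^ (j + 1) = a ^ 2 ^ (j + 1) := by
  rw [pow_succ', pow_mul, pow_mul, show (a + 2 * d) ^ 2 = a ^ 2 by
    linear_combination (a * d + d ^ 2) * h4]

theorem add_eq_pow_add_two_mul (h4 : (4 : R) = 0) {a b da db : R}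
    (ha : a = a ^ 2 ^ (n + 1) + 2 * da) (hb : b = b ^ 2 ^ (n + 1) + 2 * db) :
    a + b = (a + b) ^ 2 ^ (n + 1) + 2 * (da + db - (a * b) ^ 2 ^ n) := by
  rw [add_pow_two_pow_succ h4]
  linear_combination ha + hb

variable (π : R →+* K) (hπ : Function.Surjective π) (hker : ∀ r, π r = 0 ↔ ∃ y, r = 2 * y)
  (hfrob : ∀ x : K, x ^ 2 ^ (n + 1) = x)

noncomputable def teich (n : ℕ) (x : K) : R :=
  Function.surjInv hπ x ^ 2 ^ (n + 1)

include hfrob in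
theorem map_teich (x : K) : π (teich π hπ n x) = x := by
  rw [teich, map_pow, Function.surjInv_eq hπ, hfrob]

include hker

theorem two_eq_zero_of_ker : (2 : K) = 0 := by
  rw [← map_ofNat π 2]
  exact (hker 2).2 ⟨1, (mul_one 2).symm⟩

theorem pow_two_pow_succ_eq_of_map_eq (h4 : (4 : R) = 0) {x y : R} (h : π x = π y) (j : ℕ) :
    x ^ 2 ^ (j + 1) = y ^ 2 ^ (j + 1) := by
  obtain ⟨d, hd⟩ := (hker (x - y)).1 (by rw [map_sub, h, sub_self])
  rw [show x = y + 2 * d by linear_combination hd, add_two_mul_pow_two_pow_succ h4]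

theorem teich_map (h4 : (4 : R) = 0) {x : R} (hx : x ^ 2 ^ (n + 1) = x) :
    teich π hπ n (π x) = x := by
  conv_rhs => rw [← hx]
  exact pow_two_pow_succ_eq_of_map_eq π hker h4 (Function.surjInv_eq hπ _) n

include hπ in
theorem map_eq_zero_of_two_mul_eq_zero (h4 : (4 : R) = 0) (h2 : (2 : R) ≠ 0) {x : R}
    (hx : 2 * x = 0) : π x = 0 := by
  -- otherwise `x` is a unit modulo the nilpotent ideal `2R`, and `2 x = 0` would force `2 = 0`
  by_contra hx0
  obtain ⟨y, hy⟩ := hπ (π x)⁻¹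
  obtain ⟨z, hz⟩ := (hker (x * y - 1)).1 (by
    rw [map_sub, map_mul, hy, mul_inv_cancel₀ hx0, map_one, sub_self])
  exact h2 (by linear_combination y * hx - 2 * hz - z * h4)

include hπ in
theorem eq_iff_of_eq_pow_add_two_mul (h4 : (4 : R) = 0) (h2 : (2 : R) ≠ 0) {a b da db : R}
    (ha : a = a ^ 2 ^ (n + 1) + 2 * da) (hb : b = b ^ 2 ^ (n + 1) + 2 * db) :
    a = b ↔ π a = π b ∧ π da = π db := by
  constructor
  · rintro rfl
    have h := map_eq_zero_of_two_mul_eq_zero π hπ hker h4 h2 (x := da - db)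
      (by linear_combination hb - ha)
    exact ⟨rfl, sub_eq_zero.1 (by rwa [map_sub] at h)⟩
  · rintro ⟨hab, hd⟩
    obtain ⟨y, hy⟩ := (hker (da - db)).1 (by rw [map_sub, hd, sub_self])
    linear_combination ha - hb + pow_two_pow_succ_eq_of_map_eq π hker h4 hab n + 2 * hy + y * h4

include hfrob

theorem exists_eq_pow_add_two_mul (c : R) : ∃ d, c = c ^ 2 ^ (n + 1) + 2 * d :=
  ((hker (c - c ^ 2 ^ (n + 1))).1 (by rw [map_sub, map_pow, hfrob, sub_self])).imp fun _ hd => by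
    linear_combination hd

theorem exists_sum_eq_pow_add_two_mul (h4 : (4 : R) = 0) {x y z w : R}
    (hx : x ^ 2 ^ (n + 1) = x) (hy : y ^ 2 ^ (n + 1) = y) (hz : z ^ 2 ^ (n + 1) = z)
    (hw : w ^ 2 ^ (n + 1) = w) :
    ∃ d, x + y + z + w = (x + y + z + w) ^ 2 ^ (n + 1) + 2 * d ∧
      π d ^ 2 = esymm₂ (π x, π y, π z, π w) := by
  have hteich : ∀ {u : R}, u ^ 2 ^ (n + 1) = u → u = u ^ 2 ^ (n + 1) + 2 * 0 := fun hu => by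
    rw [hu, mul_zero, add_zero]
  have hsqrt : ∀ u : R, π (u ^ 2 ^ n) ^ 2 = π u := fun u => by
    rw [← map_pow, ← pow_mul, ← pow_succ, map_pow, hfrob]
  have h2 := two_eq_zero_of_ker π hker
  refine ⟨_, add_eq_pow_add_two_mul h4 (add_eq_pow_add_two_mul h4
    (add_eq_pow_add_two_mul h4 (hteich hx) (hteich hy)) (hteich hz)) (hteich hw), ?_⟩
  have hA := hsqrt (x * y)
  have hB := hsqrt ((x + y) * z)
  have hC := hsqrt ((x + y + z) * w)
  simp only [map_mul, map_add] at hA hB hC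
  simp only [map_sub, map_add, map_zero, esymm₂]
  linear_combination hA + hB + hC + (π ((x * y) ^ 2 ^ n) * π (((x + y) * z) ^ 2 ^ n) +
    π ((x * y) ^ 2 ^ n) * π (((x + y + z) * w) ^ 2 ^ n) +
    π (((x + y) * z) ^ 2 ^ n) * π (((x + y + z) * w) ^ 2 ^ n)) * h2

theorem teich_pow (h4 : (4 : R) = 0) (x : K) :
    teich π hπ n x ^ 2 ^ (n + 1) = teich π hπ n x :=
  pow_two_pow_succ_eq_of_map_eq π hker h4
    ((map_teich π hπ hfrob x).trans (Function.surjInv_eq hπ x).symm) n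

include hπ

theorem sum_eq_iff_esymm (h4 : (4 : R) = 0) (h2 : (2 : R) ≠ 0) {c d : R}
    (hc : c = c ^ 2 ^ (n + 1) + 2 * d) {x y z w : R}
    (hx : x ^ 2 ^ (n + 1) = x) (hy : y ^ 2 ^ (n + 1) = y) (hz : z ^ 2 ^ (n + 1) = z)
    (hw : w ^ 2 ^ (n + 1) = w) :
    x + y + z + w = c ↔
      esymm₁ (π x, π y, π z, π w) = π c ∧ esymm₂ (π x, π y, π z, π w) = π d ^ 2 := by
  obtain ⟨d', hS, hd'⟩ := exists_sum_eq_pow_add_two_mul π hker hfrob h4 hx hy hz hw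
  have hsq_inj : ∀ a b : K, a ^ 2 = b ^ 2 → a = b := fun a b h => by
    have h2K := two_eq_zero_of_ker π hker
    exact sub_eq_zero.1 (pow_eq_zero_iff two_ne_zero |>.1 (by
      linear_combination h + (b ^ 2 - a * b) * h2K))
  rw [eq_iff_of_eq_pow_add_two_mul π hπ hker h4 h2 hS hc, ← hd']
  simp only [esymm₁, map_add]
  exact and_congr_right fun _ => ⟨congrArg (· ^ 2), hsq_inj _ _⟩

theorem card_teich_sum_eq (h4 : (4 : R) = 0) (h2 : (2 : R) ≠ 0) {c d : R}
    (hc : c = c ^ 2 ^ (n + 1) + 2 * d) :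
    Nat.card {t : R × R × R × R //
        t.1 ^ 2 ^ (n + 1) = t.1 ∧ t.2.1 ^ 2 ^ (n + 1) = t.2.1 ∧
        t.2.2.1 ^ 2 ^ (n + 1) = t.2.2.1 ∧ t.2.2.2 ^ 2 ^ (n + 1) = t.2.2.2 ∧
        t.1 + t.2.1 + t.2.2.1 + t.2.2.2 = c} =
      Nat.card {v : K × K × K × K // esymm₁ v = π c ∧ esymm₂ v = π d ^ 2} := by
  have hiff := fun {x y z w : R} => sum_eq_iff_esymm π hπ hker hfrob h4 h2 hc (x := x) (y := y)
    (z := z) (w := w)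
  have hT := teich_pow π hπ hker hfrob h4
  have hπT := map_teich π hπ hfrob
  refine Nat.card_congr
    { toFun := fun t => ⟨(π t.1.1, π t.1.2.1, π t.1.2.2.1, π t.1.2.2.2),
        (hiff t.2.1 t.2.2.1 t.2.2.2.1 t.2.2.2.2.1).1 t.2.2.2.2.2⟩
      invFun := fun v => ⟨(teich π hπ n v.1.1, teich π hπ n v.1.2.1, teich π hπ n v.1.2.2.1,
          teich π hπ n v.1.2.2.2), hT _, hT _, hT _, hT _,
        (hiff (hT _) (hT _) (hT _) (hT _)).2 (by simpa only [hπT] using v.2)⟩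
      left_inv := fun ⟨_, hx, hy, hz, hw, _⟩ => Subtype.ext <| by
        simp only [teich_map π hπ hker h4 hx, teich_map π hπ hker h4 hy,
          teich_map π hπ hker h4 hz, teich_map π hπ hker h4 hw]
      right_inv := fun _ => Subtype.ext <| by simp only [hπT] }

end Teichmuller

section GaloisRing

local notation "ρ" => ZMod.castHom (show (2:ℕ) ∣ 4 by norm_num) (ZMod 2)

theorem ZMod.two_dvd_of_castHom_eq_zero (c : ZMod 4) (hc : ρ c = 0) : 2 ∣ c := by
  fin_cases c
  · exact ⟨0, rfl⟩
  · exact absurd hc (by decide)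
  · exact ⟨1, rfl⟩
  · exact absurd hc (by decide)

theorem Polynomial.C_two_dvd_of_map_eq_zero {p : (ZMod 4)[X]} (hp : p.map ρ = 0) : C 2 ∣ p :=
  (C_dvd_iff_dvd_coeff _ _).2 fun i =>
    ZMod.two_dvd_of_castHom_eq_zero _ (by rw [← coeff_map, hp, coeff_zero])

namespace AdjoinRoot

theorem natCard_of_monic {A : Type*} [CommRing A] {g : A[X]} (hg : g.Monic) :
    Nat.card (AdjoinRoot g) = Nat.card A ^ g.natDegree := by
  rw [Nat.card_congr (powerBasis' hg).basis.equivFun.toEquiv, Nat.card_fun, Nat.card_fin]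
  rfl

variable {f : (ZMod 4)[X]}

theorem four_eq_zero : (4 : AdjoinRoot f) = 0 := by
  rw [← map_ofNat (of f) 4, show (4 : ZMod 4) = 0 from rfl, map_zero]

theorem mk_C_two : mk f (C 2) = 2 := by
  rw [mk_C]
  rfl

theorem two_ne_zero_of_monic (hf : f.Monic) (hdeg : f.natDegree ≠ 0) : (2 : AdjoinRoot f) ≠ 0 := by
  rw [← mk_C_two, Ne, mk_eq_zero]
  exact hf.not_dvd_of_natDegree_lt (C_ne_zero.2 (by decide)) (by rw [natDegree_C]; omega)

noncomputable def residue (f : (ZMod 4)[X]) : AdjoinRoot f →+* AdjoinRoot (f.map ρ) :=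
  map ρ f (f.map ρ) dvd_rfl

theorem residue_mk (g : (ZMod 4)[X]) : residue f (mk f g) = mk (f.map ρ) (g.map ρ) := by
  rw [residue, map, lift_mk, ← eval₂_map, ← aeval_eq, aeval_def, algebraMap_eq]

theorem residue_surjective : Function.Surjective (residue f) := by
  intro r
  obtain ⟨g, rfl⟩ := mk_surjective r
  obtain ⟨g, rfl⟩ := map_surjective ρ (ZMod.castHom_surjective _) g
  exact ⟨mk f g, residue_mk g⟩

theorem residue_eq_zero_iff (r : AdjoinRoot f) : residue f r = 0 ↔ ∃ y, r = 2 * y := by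
  constructor
  · intro hr
    obtain ⟨g, rfl⟩ := mk_surjective r
    obtain ⟨h, hh⟩ := mk_eq_zero.1 ((residue_mk g).symm.trans hr)
    obtain ⟨h, rfl⟩ := map_surjective ρ (ZMod.castHom_surjective _) h
    obtain ⟨w, hw⟩ := C_two_dvd_of_map_eq_zero (p := g - f * h) (by
      rw [Polynomial.map_sub, Polynomial.map_mul, hh, sub_self])
    refine ⟨mk f w, ?_⟩
    rw [← mk_C_two, ← map_mul, ← hw, map_sub, map_mul, mk_self, zero_mul, sub_zero]
  · rintro ⟨y, rfl⟩
    rw [map_mul, map_ofNat, ← map_ofNat (of (f.map ρ)) 2, show (2 : ZMod 2) = 0 from rfl,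
      map_zero, zero_mul]

end AdjoinRoot

end GaloisRing

/-- With `R = GR(4,m)` realized as `(ℤ/4ℤ)[x]/(f)` and
`𝒯 = {z : z ^ 2^m = z}` the Teichmüller set (`m` odd), for every `C ∈ R` the number of
quadruples `(X,Y,Z,W) ∈ 𝒯⁴` with `X + Y + Z + W = C` equals `2^m` if `C = 0`,
`2^m (2^m + 1)` if `C ∈ 2R ∖ {0}`, and `2^(2m)` if `C ∉ 2R`. -/
theorem statement6 (m : ℕ) (hm : Odd m)
    (f : Polynomial (ZMod 4)) (hmonic : f.Monic) (hdeg : f.natDegree = m)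
    (hirr : Irreducible (f.map (ZMod.castHom (show (2:ℕ) ∣ 4 by norm_num) (ZMod 2))))
    (C : AdjoinRoot f) :
    Nat.card {t : AdjoinRoot f × AdjoinRoot f × AdjoinRoot f × AdjoinRoot f //
        t.1 ^ 2 ^ m = t.1 ∧ t.2.1 ^ 2 ^ m = t.2.1 ∧ t.2.2.1 ^ 2 ^ m = t.2.2.1 ∧
        t.2.2.2 ^ 2 ^ m = t.2.2.2 ∧
        t.1 + t.2.1 + t.2.2.1 + t.2.2.2 = C} =
      if C = 0 then 2 ^ m
      else if ∃ x : AdjoinRoot f, C = 2 * x then 2 ^ m * (2 ^ m + 1)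
      else 2 ^ (2 * m) := by
  have := Fact.mk hirr
  set K := AdjoinRoot (f.map (ZMod.castHom (show (2:ℕ) ∣ 4 by norm_num) (ZMod 2)))
  set π := AdjoinRoot.residue f
  have hπ : Function.Surjective π := AdjoinRoot.residue_surjective
  have hker : ∀ r, π r = 0 ↔ ∃ y, r = 2 * y := AdjoinRoot.residue_eq_zero_iff
  have h4 : (4 : AdjoinRoot f) = 0 := AdjoinRoot.four_eq_zero
  have h2 := AdjoinRoot.two_ne_zero_of_monic hmonic (by rw [hdeg]; exact hm.pos.ne')
  have hcard : Nat.card K = 2 ^ m := by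
    rw [AdjoinRoot.natCard_of_monic (hmonic.map _), Nat.card_zmod, hmonic.natDegree_map, hdeg]
  have : Finite K := Nat.finite_of_card_ne_zero (by rw [hcard]; positivity)
  let := Fintype.ofFinite K
  rw [Nat.card_eq_fintype_card] at hcard
  have : CharP K 2 :=
    CharTwo.of_one_ne_zero_of_two_eq_zero one_ne_zero (two_eq_zero_of_ker π hker)
  obtain ⟨n, rfl⟩ : ∃ n, m = n + 1 := Nat.exists_eq_add_one.2 hm.pos
  have hfrob : ∀ x : K, x ^ 2 ^ (n + 1) = x := fun x => by rw [← hcard, FiniteField.pow_card]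
  have hK := CharTwo.sq_add_add_one_ne_zero hm hfrob
  obtain ⟨D, hD⟩ := exists_eq_pow_add_two_mul π hker hfrob C
  have hzero : C = 0 ↔ π C = 0 ∧ π D ^ 2 = 0 := by
    rw [eq_iff_of_eq_pow_add_two_mul π hπ hker h4 h2 hD
      (by simp : (0 : AdjoinRoot f) = 0 ^ 2 ^ (n + 1) + 2 * 0), map_zero,
      pow_eq_zero_iff two_ne_zero]
  rw [card_teich_sum_eq π hπ hker hfrob h4 h2 hD, Nat.card_eq_fintype_card,
    Fintype.card_subtype]
  split_ifs with h0 h2R <;> rw [hzero] at h0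
  · rw [h0.1, h0.2, card_esymm_fiber_zero_zero hK, hcard]
  · rw [← hker] at h2R
    rw [h2R, card_esymm_fiber_zero_of_ne_zero hK (by tauto), hcard]
  · rw [← hker] at h2R
    rw [card_esymm_fiber_of_ne_zero h2R, hcard, ← pow_mul, mul_comm]
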